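/- arXiv:1912.12483 — 2 statements merged into one kernel-verified Lean document; each statement's English description precedes it below -/
import Mathlib

section
/- Let k be a field of characteristic zero and G a group. Suppose P is a class of objects of FDRep k G that is closed under isomorphism, closed under retracts (if Y is a direct summand of X and X belongs to P then Y belongs to P), and closed under tensoring with arbitrary objects (if X belongs to P and Y is any object then X ⊗ Y belongs to P). If P contains some nonzero representation, then P contains every object of FDRep k G. (This instantiates the paper's Lemma that a Tannakian category in characteristic zero is simple, at the neutral Tannakian category of finite-dimensional representations.) -/
/-!
If `X ∈ P` is nonzero, then `P` contains `Xᵛ ⊗ X ≅ End X`, and the unit is a retract of `End X`: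
include it as the scalar endomorphisms and project back by the trace divided by `dim X`,
which is invertible in characteristic zero. Tensoring the unit with any `Y` then gives `Y`.
-/

open CategoryTheory MonoidalCategory Limits

universe u

namespace Representation

variable {k G V : Type*} [Field k] [Group G] [AddCommGroup V] [Module k V]
  (ρ : Representation k G V)

lemma linHom_apply_id (g : G) : linHom ρ ρ g LinearMap.id = LinearMap.id := by
  ext v
  simp [linHom_apply, ← Module.End.mul_apply, ← map_mul]

lemma trace_linHom_apply [FiniteDimensional k V] (g : G) (f : V →ₗ[k] V) :
    LinearMap.trace k V (linHom ρ ρ g f) = LinearMap.trace k V f := by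
  rw [linHom_apply, show ρ g ∘ₗ f ∘ₗ ρ g⁻¹ = ρ g * (f * ρ g⁻¹) from rfl,
    LinearMap.trace_mul_comm, mul_assoc, ← map_mul, inv_mul_cancel, map_one, mul_one]

end Representation

namespace FDRep

variable {k G : Type u} [Field k] [Group G]

lemma isZero_of_subsingleton (X : FDRep k G) [Subsingleton X] : IsZero X := by
  rw [IsZero.iff_id_eq_zero]
  ext x
  exact Subsingleton.elim _ _

lemma finrank_pos_of_not_isZero {X : FDRep k G} (hX : ¬IsZero X) : 0 < Module.finrank k X := by
  rw [Module.finrank_pos_iff]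
  by_contra! h
  exact hX (isZero_of_subsingleton X)

variable (X : FDRep k G)

def scalarEnd : 𝟙_ (FDRep k G) ⟶ of (Representation.linHom X.ρ X.ρ) where
  hom := FGModuleCat.ofHom (LinearMap.toSpanSingleton k _ LinearMap.id)
  comm g := FGModuleCat.hom_ext <| LinearMap.ext fun c =>
    show c • LinearMap.id = Representation.linHom X.ρ X.ρ g (c • LinearMap.id) by
      rw [map_smul, Representation.linHom_apply_id]

noncomputable def trace : of (Representation.linHom X.ρ X.ρ) ⟶ 𝟙_ (FDRep k G) where
  hom := FGModuleCat.ofHom (LinearMap.trace k X)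
  comm g := FGModuleCat.hom_ext <| LinearMap.ext fun f =>
    Representation.trace_linHom_apply X.ρ g f

lemma scalarEnd_comp_trace : scalarEnd X ≫ trace X = (Module.finrank k X : k) • 𝟙 _ := by
  refine Action.hom_ext _ _ (FGModuleCat.hom_ext <| LinearMap.ext fun c => ?_)
  change LinearMap.trace k X (c • LinearMap.id) = (Module.finrank k X : k) • c
  rw [map_smul, LinearMap.trace_id, smul_eq_mul, smul_eq_mul, mul_comm]

noncomputable def unitRetractEnd (hX : (Module.finrank k X : k) ≠ 0) :
    Retract (𝟙_ (FDRep k G)) (of (Representation.linHom X.ρ X.ρ)) where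
  i := scalarEnd X
  r := (Module.finrank k X : k)⁻¹ • trace X
  retract := by
    rw [Linear.comp_smul, scalarEnd_comp_trace, smul_smul, inv_mul_cancel₀ hX, one_smul]

end FDRep

/-- A Tannakian category in characteristic zero is simple, instantiated at `FDRep k G`:
any class of objects closed under isomorphism, retracts and tensoring with arbitrary
objects, containing a nonzero object, contains every object. -/
theorem fdRep_simple_of_charZero
    (k G : Type) [Field k] [CharZero k] [Group G]
    (P : FDRep k G → Prop)
    (hiso : ∀ {X Y : FDRep k G}, (X ≅ Y) → P X → P Y)
    (hretract : ∀ {X Y : FDRep k G} (i : Y ⟶ X) (r : X ⟶ Y),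
      i ≫ r = 𝟙 Y → P X → P Y)
    (htensor : ∀ {X : FDRep k G} (Y : FDRep k G), P X → P (X ⊗ Y))
    (hnonzero : ∃ X : FDRep k G, P X ∧ ¬ IsZero X) :
    ∀ X : FDRep k G, P X := by
  obtain ⟨X, hPX, hX⟩ := hnonzero
  have hdim : (Module.finrank k X : k) ≠ 0 :=
    Nat.cast_ne_zero.mpr (FDRep.finrank_pos_of_not_isZero hX).ne'
  have hEnd : P (FDRep.of (Representation.linHom X.ρ X.ρ)) :=
    hiso (β_ _ _ ≪≫ FDRep.dualTensorIsoLinHom X.ρ X) (htensor _ hPX)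
  have hunit : P (𝟙_ (FDRep k G)) :=
    let e := FDRep.unitRetractEnd X hdim
    hretract e.i e.r e.retract hEnd
  exact fun Y => hiso (λ_ Y) (htensor Y hunit)
end

section
/- Let X and Y be spectral spaces and f : X → Y a spectral map which is bijective and lifts all specialization relations: whenever y ⤳ y' is a specialization in Y (y' lies in the closure of y) and f(x) = y, there exists x' ∈ X with x ⤳ x' and f(x') = y'. Then f is a homeomorphism. -/
/-!
Closed sets of a spectral space are closed in the constructible topology, which is quasi-compact.
Hence, for a spectral map `f` and a closed `Z`, the directed family `Z ∩ f ⁻¹' V`, with `V`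
running over the quasi-compact open neighbourhoods of a point `y ∈ closure (f '' Z)`, has a common
point `x`; then `f x ⤳ y`. So `f '' Z` is closed as soon as it is stable under specialization,
which is the case when `f` lifts specializations. A continuous closed bijection is a homeomorphism.
-/

open TopologicalSpace Topology

section

variable {X Y : Type*} [TopologicalSpace X] [TopologicalSpace Y]

lemma IsOpen.isOpen_constructibleTopology [PrespectralSpace X] {s : Set X} (hs : IsOpen s) :
    IsOpen[constructibleTopology X] s := by
  obtain ⟨S, hS, rfl⟩ := PrespectralSpace.isTopologicalBasis.open_eq_sUnion hs
  exact @isOpen_sUnion X (constructibleTopology X) S fun t ht ↦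
    (hS ht).2.isOpen_constructibleTopology_of_isOpen (hS ht).1

lemma IsClosed.isClosed_constructibleTopology [PrespectralSpace X] {s : Set X}
    (hs : IsClosed s) : IsClosed[constructibleTopology X] s :=
  @isOpen_compl_iff X s (constructibleTopology X) |>.1 hs.isOpen_compl.isOpen_constructibleTopology

lemma IsClosed.nonempty_inter_iInter_of_directed [CompactSpace X] [QuasiSober X]
    [PrespectralSpace X] [QuasiSeparatedSpace X] {ι : Type*} [Nonempty ι] {Z : Set X}
    (hZ : IsClosed Z) (U : ι → Set X) (hdir : Directed (· ⊇ ·) U) (hopen : ∀ i, IsOpen (U i))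
    (hcompact : ∀ i, IsCompact (U i)) (hmeet : ∀ i, (Z ∩ U i).Nonempty) :
    (Z ∩ ⋂ i, U i).Nonempty := by
  let C : ι → Set (WithConstructibleTopology X) := fun i ↦ WithTopology.ofTopology ⁻¹' (Z ∩ U i)
  have hC_closed (i : ι) : IsClosed (C i) :=
    WithConstructibleTopology.isClosed_iff.2 <| @IsClosed.inter X _ _ (constructibleTopology X)
      hZ.isClosed_constructibleTopology
      (@isOpen_compl_iff X _ (constructibleTopology X) |>.1 <|
        IsCompact.isOpen_constructibleTopology_of_isClosed (by simpa using hcompact i)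
          (hopen i).isClosed_compl)
  obtain ⟨w, hw⟩ := IsCompact.nonempty_iInter_of_directed_nonempty_isCompact_isClosed C
    (hdir.mono_comp (g := fun s ↦ WithTopology.ofTopology ⁻¹' (Z ∩ s)) _
      fun _ _ h ↦ Set.preimage_mono (Set.inter_subset_inter_right Z h))
    (fun i ↦ (WithTopology.ofTopology_surjective _).nonempty_preimage.2 (hmeet i))
    (fun i ↦ (hC_closed i).isCompact) hC_closed
  simp only [Set.mem_iInter, C, Set.mem_preimage, Set.mem_inter_iff] at hw
  exact ⟨_, (hw (Classical.arbitrary ι)).1, Set.mem_iInter.2 fun i ↦ (hw i).2⟩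

lemma specializes_of_forall_isCompact_isOpen [PrespectralSpace X] {x y : X}
    (h : ∀ V, IsOpen V → IsCompact V → y ∈ V → x ∈ V) : x ⤳ y := by
  refine specializes_iff_forall_open.2 fun s hs hys ↦ ?_
  obtain ⟨V, ⟨hVo, hVc⟩, hyV, hVs⟩ :=
    PrespectralSpace.isTopologicalBasis.exists_subset_of_mem_open hys hs
  exact hVs (h V hVo hVc hyV)

section Spectral

variable [CompactSpace X] [QuasiSober X] [PrespectralSpace X] [QuasiSeparatedSpace X]
  [PrespectralSpace Y] [QuasiSeparatedSpace Y]

lemma IsSpectralMap.isClosed_image_of_stableUnderSpecialization {f : X → Y}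
    (hf : IsSpectralMap f) {Z : Set X} (hZ : IsClosed Z)
    (hstable : StableUnderSpecialization (f '' Z)) : IsClosed (f '' Z) := by
  refine isClosed_of_closure_subset fun y hy ↦ ?_
  let ι := {V : Set Y // IsOpen V ∧ IsCompact V ∧ y ∈ V}
  have : Nonempty ι := by
    obtain ⟨V, ⟨hVo, hVc⟩, hyV, -⟩ :=
      PrespectralSpace.isTopologicalBasis.exists_subset_of_mem_open (Set.mem_univ y) isOpen_univ
    exact ⟨⟨V, hVo, hVc, hyV⟩⟩
  have hdir : Directed (· ⊇ ·) fun V : ι ↦ f ⁻¹' V.1 := by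
    rintro ⟨V₁, hV₁o, hV₁c, hyV₁⟩ ⟨V₂, hV₂o, hV₂c, hyV₂⟩
    refine ⟨⟨V₁ ∩ V₂, hV₁o.inter hV₂o,
      QuasiSeparatedSpace.inter_isCompact _ _ hV₁o hV₁c hV₂o hV₂c, hyV₁, hyV₂⟩, ?_, ?_⟩ <;>
      simp [Set.preimage_inter]
  have hmeet (V : ι) : (Z ∩ f ⁻¹' V.1).Nonempty := by
    obtain ⟨-, hV, x, hxZ, rfl⟩ := mem_closure_iff.1 hy V.1 V.2.1 V.2.2.2
    exact ⟨x, hxZ, hV⟩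
  obtain ⟨x, hxZ, hxV⟩ := hZ.nonempty_inter_iInter_of_directed _ hdir
    (fun V ↦ V.2.1.preimage hf.continuous) (fun V ↦ hf.isCompact_preimage_of_isOpen V.2.1 V.2.2.1)
    hmeet
  have hspec : f x ⤳ y := specializes_of_forall_isCompact_isOpen fun V hVo hVc hyV ↦
    Set.mem_iInter.1 hxV ⟨V, hVo, hVc, hyV⟩
  exact hstable hspec ⟨x, hxZ, rfl⟩

lemma IsSpectralMap.isClosedMap_of_specializingMap {f : X → Y} (hf : IsSpectralMap f)
    (hspec : SpecializingMap f) : IsClosedMap f := fun _ hZ ↦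
  hf.isClosed_image_of_stableUnderSpecialization hZ (hZ.stableUnderSpecialization.image hspec)

end Spectral

end

theorem isHomeomorph_of_spectral_bijective_specialization_lifting_general
    {X Y : Type} [TopologicalSpace X] [TopologicalSpace Y]
    [CompactSpace X] [QuasiSober X] [QuasiSeparatedSpace X]
    (hXb : IsTopologicalBasis {s : Set X | IsOpen s ∧ IsCompact s})
    [QuasiSeparatedSpace Y]
    (hYb : IsTopologicalBasis {s : Set Y | IsOpen s ∧ IsCompact s})
    (f : X → Y) (hf : IsSpectralMap f) (hbij : Function.Bijective f)
    (hlift : ∀ (x : X) (y' : Y), f x ⤳ y' → ∃ x' : X, x ⤳ x' ∧ f x' = y') :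
    IsHomeomorph f := by
  have : PrespectralSpace X := ⟨hXb⟩
  have : PrespectralSpace Y := ⟨hYb⟩
  have hclosed : IsClosedMap f := hf.isClosedMap_of_specializingMap fun x _ h ↦ hlift x _ h
  exact isHomeomorph_iff_continuous_isClosedMap_bijective.2 ⟨hf.continuous, hclosed, hbij⟩

/-- A bijective spectral map between spectral spaces which lifts all specialization
relations is a homeomorphism. (A spectral space is a quasi-compact sober space whose
quasi-compact open subsets form a basis closed under finite intersections; the latter
closure property is expressed by `QuasiSeparatedSpace`.) -/
theorem isHomeomorph_of_spectral_bijective_specialization_lifting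
    {X Y : Type} [TopologicalSpace X] [TopologicalSpace Y]
    [CompactSpace X] [QuasiSober X] [QuasiSeparatedSpace X]
    (hXb : IsTopologicalBasis {s : Set X | IsOpen s ∧ IsCompact s})
    [CompactSpace Y] [QuasiSober Y] [QuasiSeparatedSpace Y]
    (hYb : IsTopologicalBasis {s : Set Y | IsOpen s ∧ IsCompact s})
    (f : X → Y) (hf : IsSpectralMap f) (hbij : Function.Bijective f)
    (hlift : ∀ (x : X) (y' : Y), f x ⤳ y' → ∃ x' : X, x ⤳ x' ∧ f x' = y') :
    IsHomeomorph f :=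
  isHomeomorph_of_spectral_bijective_specialization_lifting_general hXb hYb f hf hbij hlift
end
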